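/- The directed circulant Circ(9; {1,3,4,6,7,8}) minus the three arcs (1,2), (3,4), (8,6) admits a decomposition into five directed 9-cycles and three pairwise vertex-disjoint directed paths: a (2,3)-path of length 1, a (4,1)-path of length 2, and a (6,8)-path of length 3. -/

import Mathlib

/-- Arc set of the directed cycle on `Z_9` enumerated by `c`. -/
def cycArcs9 (c : ZMod 9 → ZMod 9) : Set (ZMod 9 × ZMod 9) :=
  {p | ∃ i : ZMod 9, p = (c i, c (i + 1))}

/-- Arc set of the directed path with vertex sequence `p 0, p 1, …, p n`. -/
def pathArcs9 {n : ℕ} (p : Fin (n + 1) → ZMod 9) : Set (ZMod 9 × ZMod 9) :=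
  {q | ∃ i : Fin n, q = (p i.castSucc, p i.succ)}

/-!
The five Hamiltonian cycles and three paths are given explicitly. Their `5 · 9 + 1 + 2 + 3 = 51`
arcs are as many as the `9 · 6 - 3` arcs to be covered; once the arc sets are written as
`Finset`s, that each arc is covered exactly once is decided by computation.
-/

def cycArcFinset9 (c : ZMod 9 → ZMod 9) : Finset (ZMod 9 × ZMod 9) :=
  Finset.univ.image fun i => (c i, c (i + 1))

def pathArcFinset9 {n : ℕ} (p : Fin (n + 1) → ZMod 9) : Finset (ZMod 9 × ZMod 9) :=
  Finset.univ.image fun i : Fin n => (p i.castSucc, p i.succ)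

def circ9ArcFinset : Finset (ZMod 9 × ZMod 9) :=
  Finset.univ.filter fun q => q.2 - q.1 ∈ ({1, 3, 4, 6, 7, 8} : Finset (ZMod 9))

theorem coe_cycArcFinset9 (c : ZMod 9 → ZMod 9) : ↑(cycArcFinset9 c) = cycArcs9 c := by
  ext p
  simp [cycArcFinset9, cycArcs9, eq_comm]

theorem coe_pathArcFinset9 {n : ℕ} (p : Fin (n + 1) → ZMod 9) :
    ↑(pathArcFinset9 p) = pathArcs9 p := by
  ext q
  simp [pathArcFinset9, pathArcs9, eq_comm]

theorem coe_circ9ArcFinset :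
    ↑circ9ArcFinset = {q : ZMod 9 × ZMod 9 | q.2 - q.1 ∈ ({1, 3, 4, 6, 7, 8} : Set (ZMod 9))} := by
  ext q
  simp [circ9ArcFinset]

def cycles : Fin 5 → ZMod 9 → ZMod 9 :=
  ![![0, 1, 4, 2, 5, 3, 6, 7, 8],
    ![0, 3, 1, 5, 4, 8, 7, 2, 6],
    ![0, 4, 5, 8, 2, 1, 7, 6, 3],
    ![0, 6, 4, 1, 8, 3, 7, 5, 2],
    ![0, 7, 4, 3, 2, 8, 5, 6, 1]]

def path₁ : Fin 2 → ZMod 9 := ![2, 3]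

def path₂ : Fin 3 → ZMod 9 := ![4, 7, 1]

def path₃ : Fin 4 → ZMod 9 := ![6, 5, 0, 8]

def decompositionArcs : Fin 8 → Finset (ZMod 9 × ZMod 9) :=
  ![cycArcFinset9 (cycles 0), cycArcFinset9 (cycles 1), cycArcFinset9 (cycles 2),
    cycArcFinset9 (cycles 3), cycArcFinset9 (cycles 4), pathArcFinset9 path₁,
    pathArcFinset9 path₂, pathArcFinset9 path₃]

theorem coe_decompositionArcs : (fun k => (decompositionArcs k : Set (ZMod 9 × ZMod 9))) =
    ![cycArcs9 (cycles 0), cycArcs9 (cycles 1), cycArcs9 (cycles 2), cycArcs9 (cycles 3),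
      cycArcs9 (cycles 4), pathArcs9 (n := 1) path₁, pathArcs9 (n := 2) path₂,
      pathArcs9 (n := 3) path₃] := by
  funext k
  fin_cases k <;> simp [decompositionArcs, coe_cycArcFinset9, coe_pathArcFinset9]

theorem pairwise_disjoint_decompositionArcs :
    Pairwise (Function.onFun Disjoint decompositionArcs) :=
  (pairwise_disjoint_on decompositionArcs).2 (by decide)

theorem decompositionArcs_union_eq :
    cycArcFinset9 (cycles 0) ∪ cycArcFinset9 (cycles 1) ∪ cycArcFinset9 (cycles 2) ∪
        cycArcFinset9 (cycles 3) ∪ cycArcFinset9 (cycles 4) ∪ pathArcFinset9 path₁ ∪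
        pathArcFinset9 path₂ ∪ pathArcFinset9 path₃ =
      circ9ArcFinset \ {(1, 2), (3, 4), (8, 6)} := by
  decide +kernel

theorem circ9_Y_decomposition :
    ∃ (c : Fin 5 → ZMod 9 → ZMod 9) (q₁ : Fin 2 → ZMod 9) (q₂ : Fin 3 → ZMod 9)
      (q₃ : Fin 4 → ZMod 9),
      (∀ t, Function.Injective (c t)) ∧
      Function.Injective q₁ ∧ Function.Injective q₂ ∧ Function.Injective q₃ ∧
      q₁ 0 = 2 ∧ q₁ 1 = 3 ∧ q₂ 0 = 4 ∧ q₂ 2 = 1 ∧ q₃ 0 = 6 ∧ q₃ 3 = 8 ∧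
      Disjoint (Set.range q₁) (Set.range q₂) ∧
      Disjoint (Set.range q₁) (Set.range q₃) ∧
      Disjoint (Set.range q₂) (Set.range q₃) ∧
      Pairwise (Function.onFun Disjoint
        ![cycArcs9 (c 0), cycArcs9 (c 1), cycArcs9 (c 2), cycArcs9 (c 3),
          cycArcs9 (c 4), pathArcs9 (n := 1) q₁, pathArcs9 (n := 2) q₂,
          pathArcs9 (n := 3) q₃]) ∧
      cycArcs9 (c 0) ∪ cycArcs9 (c 1) ∪ cycArcs9 (c 2) ∪ cycArcs9 (c 3) ∪
          cycArcs9 (c 4) ∪ pathArcs9 (n := 1) q₁ ∪ pathArcs9 (n := 2) q₂ ∪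
          pathArcs9 (n := 3) q₃ =
        {q : ZMod 9 × ZMod 9 | q.2 - q.1 ∈ ({1, 3, 4, 6, 7, 8} : Set (ZMod 9))} \
          {((1 : ZMod 9), (2 : ZMod 9)), ((3 : ZMod 9), (4 : ZMod 9)),
           ((8 : ZMod 9), (6 : ZMod 9))} := by
  refine ⟨cycles, path₁, path₂, path₃, by decide, by decide, by decide, by decide,
    rfl, rfl, rfl, rfl, rfl, rfl, Set.disjoint_left.2 (by decide),
    Set.disjoint_left.2 (by decide), Set.disjoint_left.2 (by decide), ?_, ?_⟩
  · rw [← coe_decompositionArcs]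
    exact pairwise_disjoint_decompositionArcs.mono fun _ _ => Finset.disjoint_coe.2
  · have h := congrArg ((↑) : Finset (ZMod 9 × ZMod 9) → Set (ZMod 9 × ZMod 9))
      decompositionArcs_union_eq
    push_cast [coe_cycArcFinset9, coe_pathArcFinset9, coe_circ9ArcFinset] at h
    exact h
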